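/- arXiv:1811.06184 — 5 statements merged into one kernel-verified Lean document; each statement's English description precedes it below -/
import Mathlib

section
/- Consider a finite set V of vehicles, a set J of stations, times T = {1,...,T}, availability sets T_i ⊆ T for each i ∈ V, charging times C_i ∈ ℕ, and nonnegative rewards p : J × T → ℝ≥0. Call a set A ⊆ V × J × T feasible if (a) every (i,j,t) ∈ A has t ∈ T_i, (b) no two elements of A share the same (j,t) pair, (c) no two elements of A share the same vehicle i with discharge times within distance C_i of each other (i.e., if (i,j,t), (i,j',t') ∈ A are distinct then |t − t'| > C_i). Let O be a feasible set maximizing total reward, and let A be the output of the greedy algorithm that repeatedly selects a maximum-reward feasible triple, adds it, and removes all triples that become infeasible. Then the total reward of A is at least (1/3) times the total reward of O. -/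
open Finset Classical

noncomputable section

variable {V J : Type*}

/-- A feasible schedule: every assignment uses an available time, no two assignments share a
station/time pair, and no two assignments of the same vehicle `i` are within `C i` of each other. -/
def Feasible (avail : V → Finset ℕ) (C : V → ℕ) (A : Finset (V × J × ℕ)) : Prop :=
  (∀ a ∈ A, a.2.2 ∈ avail a.1) ∧
  (∀ a ∈ A, ∀ b ∈ A, a ≠ b → ¬(a.2.1 = b.2.1 ∧ a.2.2 = b.2.2)) ∧
  (∀ a ∈ A, ∀ b ∈ A, a ≠ b → a.1 = b.1 → C a.1 < max (a.2.2 - b.2.2) (b.2.2 - a.2.2))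

/-- Two triples conflict if they share the station/time pair, or share the vehicle with
discharge times within the charging window. (A triple conflicts with itself.) -/
def Conflict (C : V → ℕ) (a b : V × J × ℕ) : Prop :=
  (a.2.1 = b.2.1 ∧ a.2.2 = b.2.2) ∨
  (a.1 = b.1 ∧ max (a.2.2 - b.2.2) (b.2.2 - a.2.2) ≤ C a.1)

/-- Total reward of a schedule. -/
def reward (p : J → ℕ → ℝ) (A : Finset (V × J × ℕ)) : ℝ := ∑ a ∈ A, p a.2.1 a.2.2

open scoped Classical in
/-- `GreedyRun p C F A` : starting from the set `F` of feasible triples, the greedy algorithm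
(repeatedly choose a maximum-reward triple, add it, and remove all triples that became
infeasible) can output the schedule `A`. -/
inductive GreedyRun [DecidableEq V] [DecidableEq J] (p : J → ℕ → ℝ) (C : V → ℕ) :
    Finset (V × J × ℕ) → Finset (V × J × ℕ) → Prop
  | empty : GreedyRun p C ∅ ∅
  | step {F A : Finset (V × J × ℕ)} {a : V × J × ℕ} (ha : a ∈ F)
      (hmax : ∀ b ∈ F, p b.2.1 b.2.2 ≤ p a.2.1 a.2.2)
      (h : GreedyRun p C (F.filter (fun b => ¬ Conflict C a b)) A) :
      GreedyRun p C F (insert a A)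

lemma greedyRun_subset [DecidableEq V] [DecidableEq J] {p : J → ℕ → ℝ} {C : V → ℕ}
    {F A : Finset (V × J × ℕ)} (h : GreedyRun p C F A) : A ⊆ F := by
  induction h with
  | empty => simp
  | step ha hmax h ih =>
    exact Finset.insert_subset ha (ih.trans (Finset.filter_subset _ _))

lemma feasible_subset {avail : V → Finset ℕ} {C : V → ℕ} {A B : Finset (V × J × ℕ)}
    (hB : B ⊆ A) (hA : Feasible avail C A) : Feasible avail C B :=
  ⟨fun a ha => hA.1 a (hB ha),
   fun a ha b hb => hA.2.1 a (hB ha) b (hB hb),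
   fun a ha b hb => hA.2.2 a (hB ha) b (hB hb)⟩

lemma reward_nonneg {p : J → ℕ → ℝ} (hp : ∀ j t, 0 ≤ p j t) (A : Finset (V × J × ℕ)) :
    0 ≤ reward p A :=
  Finset.sum_nonneg fun a _ => hp a.2.1 a.2.2

open scoped Classical in
lemma greedy_key [DecidableEq V] [DecidableEq J]
    (avail : V → Finset ℕ) {C : V → ℕ} {p : J → ℕ → ℝ} (hp : ∀ j t, 0 ≤ p j t)
    {F A : Finset (V × J × ℕ)} (h : GreedyRun p C F A) :
    ∀ O : Finset (V × J × ℕ), Feasible avail C O → O ⊆ F →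
      reward p O ≤ 3 * reward p A := by
  induction h with
  | empty =>
    intro O _ hOF
    simp [Finset.subset_empty.mp hOF, reward]
  | @step F A a ha hmax h ih =>
    intro O hOfeas hOF
    classical
    set S : Finset (V × J × ℕ) := O.filter (fun b => Conflict C a b) with hS
    set O' : Finset (V × J × ℕ) := O.filter (fun b => ¬ Conflict C a b) with hO'
    -- reward splits
    have hsplit : reward p O = reward p S + reward p O' := by
      rw [reward, reward, reward]
      exact (Finset.sum_filter_add_sum_filter_not O _ _).symm
    -- O' fits the recursive call
    have hO'F : O' ⊆ F.filter (fun b => ¬ Conflict C a b) := by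
      intro b hb
      rw [Finset.mem_filter] at hb ⊢
      exact ⟨hOF hb.1, hb.2⟩
    have hO'rw : reward p O' ≤ 3 * reward p A :=
      ih O' (feasible_subset (Finset.filter_subset _ _) hOfeas) hO'F
    -- card of S is at most 3
    have hScard : S.card ≤ 3 := by
      set S1 : Finset (V × J × ℕ) :=
        O.filter (fun b => a.2.1 = b.2.1 ∧ a.2.2 = b.2.2) with hS1
      set S2 : Finset (V × J × ℕ) :=
        O.filter (fun b => a.1 = b.1 ∧ max (a.2.2 - b.2.2) (b.2.2 - a.2.2) ≤ C a.1) with hS2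
      have hsub : S ⊆ S1 ∪ S2 := by
        intro b hb
        rw [hS, Finset.mem_filter] at hb
        rcases hb with ⟨hbO, hconf⟩
        rcases hconf with h1 | h2
        · exact Finset.mem_union_left _ (Finset.mem_filter.mpr ⟨hbO, h1⟩)
        · exact Finset.mem_union_right _ (Finset.mem_filter.mpr ⟨hbO, h2⟩)
      have hc1 : S1.card ≤ 1 := by
        rw [Finset.card_le_one]
        intro b hb c hc
        rw [hS1, Finset.mem_filter] at hb hc
        by_contra hbc
        exact hOfeas.2.1 b hb.1 c hc.1 hbc
          ⟨hb.2.1.symm.trans hc.2.1, hb.2.2.symm.trans hc.2.2⟩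
      have hc2 : S2.card ≤ 2 := by
        by_contra hgt
        push_neg at hgt
        obtain ⟨b, hb, c, hc, d, hd, hbc, hbd, hcd⟩ := Finset.two_lt_card.mp hgt
        rw [hS2, Finset.mem_filter] at hb hc hd
        have hvb := hb.2.1; have hvc := hc.2.1; have hvd := hd.2.1
        have hBC := hOfeas.2.2 b hb.1 c hc.1 hbc (hvb.symm.trans hvc)
        have hBD := hOfeas.2.2 b hb.1 d hd.1 hbd (hvb.symm.trans hvd)
        have hCD := hOfeas.2.2 c hc.1 d hd.1 hcd (hvc.symm.trans hvd)
        rw [← hvb] at hBC hBD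
        rw [← hvc] at hCD
        have wb := hb.2.2; have wc := hc.2.2; have wd := hd.2.2
        rw [max_le_iff] at wb wc wd
        rw [lt_max_iff] at hBC hBD hCD
        omega
      calc S.card ≤ (S1 ∪ S2).card := Finset.card_le_card hsub
        _ ≤ S1.card + S2.card := Finset.card_union_le _ _
        _ ≤ 3 := by omega
    -- reward of S is at most 3 * p a
    have hSle : reward p S ≤ 3 * p a.2.1 a.2.2 := by
      have h1 : reward p S ≤ ∑ _b ∈ S, p a.2.1 a.2.2 := by
        apply Finset.sum_le_sum
        intro b hb
        exact hmax b (hOF (Finset.mem_filter.mp hb).1)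
      have h2 : ∑ _b ∈ S, p a.2.1 a.2.2 = (S.card : ℝ) * p a.2.1 a.2.2 := by
        rw [Finset.sum_const, nsmul_eq_mul]
      have h3 : (S.card : ℝ) * p a.2.1 a.2.2 ≤ 3 * p a.2.1 a.2.2 := by
        apply mul_le_mul_of_nonneg_right _ (hp _ _)
        exact_mod_cast hScard
      calc reward p S ≤ (S.card : ℝ) * p a.2.1 a.2.2 := h2 ▸ h1
        _ ≤ 3 * p a.2.1 a.2.2 := h3
    -- a is not in A
    have haA : a ∉ A := by
      intro hmem
      have := greedyRun_subset h hmem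
      rw [Finset.mem_filter] at this
      exact this.2 (Or.inl ⟨rfl, rfl⟩)
    have hins : reward p (insert a A) = p a.2.1 a.2.2 + reward p A := by
      rw [reward, Finset.sum_insert haA]; rfl
    rw [hins]
    linarith

/-- The greedy algorithm is a 1/3-approximation for the EV valet scheduling problem. -/
theorem stmt_1 [Fintype V] [Fintype J] [DecidableEq V] [DecidableEq J]
    (T : ℕ) (avail : V → Finset ℕ) (havail : ∀ i, avail i ⊆ Finset.Icc 1 T)
    (C : V → ℕ) (p : J → ℕ → ℝ) (hp : ∀ j t, 0 ≤ p j t)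
    (F₀ : Finset (V × J × ℕ))
    (hF₀ : F₀ = (Finset.univ ×ˢ Finset.univ ×ˢ Finset.Icc 1 T).filter
      (fun a => a.2.2 ∈ avail a.1))
    (O : Finset (V × J × ℕ)) (hO : Feasible avail C O) (hOF : O ⊆ F₀)
    (hOopt : ∀ O' : Finset (V × J × ℕ), Feasible avail C O' → O' ⊆ F₀ →
      reward p O' ≤ reward p O)
    (A : Finset (V × J × ℕ)) (hA : GreedyRun p C F₀ A) :
    (1 / 3 : ℝ) * reward p O ≤ reward p A := by
  have := greedy_key avail hp hA O hO hOF
  linarith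
end
end

section
/- Let x be a feasible fractional solution for a single vehicle i, i.e., x_{j,t} ≥ 0 for (j,t) with t ∈ T_i, and for every t, Σ_{j} Σ_{t' ∈ [t, t+C_i]} x_{j,t'} ≤ 1. Then the rectangles [t, t + C_i + 1) × [0, x_{j,t}) for the nonzero assignments, with fragmentation allowed only in the vertical (second) coordinate, can all be packed into the strip [1, T + C_i + 1) × [0, 1) without overlap: formally, there exists for each pair (j,t) with x_{j,t} > 0 a finite family of disjoint subintervals of [0,1) of total length x_{j,t} such that the resulting fragmented rectangles (each equal to [t, t+C_i+1) times one subinterval) are pairwise disjoint. -/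
open Finset

noncomputable def packS {J : Type*} [Fintype J] (T : ℕ) (x : J → ℕ → ℝ)
    (K : J → ℕ → ℕ) (j : J) (t : ℕ) : ℝ :=
  ∑ t' ∈ Finset.Icc 1 T, ∑ j', if K j' t' < K j t then x j' t' else 0

lemma packS_lower {J : Type*} [Fintype J] (T : ℕ) (x : J → ℕ → ℝ) (K : J → ℕ → ℕ)
    (hx0 : ∀ j t, 0 ≤ x j t) (j j' : J) (t t' : ℕ) (ht : t ∈ Finset.Icc 1 T)
    (hK : K j t < K j' t') :
    packS T x K j t + x j t ≤ packS T x K j' t' := by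
  classical
  have hinner : ∀ t'' ∈ Finset.Icc 1 T,
      (∑ j'' : J, (if j'' = j ∧ t'' = t then x j'' t'' else 0))
        = if t'' = t then x j t else 0 := by
    intro t'' _
    by_cases h : t'' = t
    · simp [h]
    · simp [h]
  have hsingle : (∑ t'' ∈ Finset.Icc 1 T, ∑ j'' : J,
      (if j'' = j ∧ t'' = t then x j'' t'' else 0)) = x j t := by
    rw [Finset.sum_congr rfl hinner, Finset.sum_ite_eq' (Finset.Icc 1 T) t (fun _ => x j t)]
    simp [ht]
  calc packS T x K j t + x j t
      = ∑ t'' ∈ Finset.Icc 1 T, ∑ j'' : J,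
          ((if K j'' t'' < K j t then x j'' t'' else 0)
            + (if j'' = j ∧ t'' = t then x j'' t'' else 0)) := by
        simp only [Finset.sum_add_distrib]
        rw [hsingle]; rfl
    _ ≤ ∑ t'' ∈ Finset.Icc 1 T, ∑ j'' : J,
          (if K j'' t'' < K j' t' then x j'' t'' else 0) := by
        refine Finset.sum_le_sum fun t'' _ => Finset.sum_le_sum fun j'' _ => ?_
        by_cases h1 : K j'' t'' < K j t
        · by_cases h2 : j'' = j ∧ t'' = t
          · obtain ⟨rfl, rfl⟩ := h2; exact absurd h1 (lt_irrefl _)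
          · simp [h1, h2, lt_trans h1 hK]
        · by_cases h2 : j'' = j ∧ t'' = t
          · obtain ⟨rfl, rfl⟩ := h2; simp [h1, hK]
          · simp only [h1, h2, if_false]
            split <;> simp [hx0]
    _ = packS T x K j' t' := rfl

lemma packS_upper {J : Type*} [Fintype J] (T C : ℕ) (x : J → ℕ → ℝ) (K : J → ℕ → ℕ)
    (hx0 : ∀ j t, 0 ≤ x j t)
    (hmono : ∀ (a : J) b (a' : J) b', b < b' → K a b < K a' b')
    (hLP : ∀ t : ℕ, (∑ j, ∑ t' ∈ Finset.Icc t (t + C), x j t') ≤ 1)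
    (j j' : J) (t t' : ℕ) (ht' : t' ∈ Finset.Icc 1 T)
    (hK : K j t < K j' t') (htw : t' ≤ t + C) :
    packS T x K j' t' + x j' t' ≤ packS T x K j t + 1 := by
  classical
  have hKle : ∀ (a : J) b (a' : J) b', K a b < K a' b' → b ≤ b' := by
    intro a b a' b' h
    by_contra hc
    push_neg at hc
    exact absurd h (not_lt.2 (le_of_lt (hmono a' b' a b hc)))
  have hKge : ∀ (a : J) b, ¬ (K a b < K j t) → t ≤ b := by
    intro a b h
    by_contra hc
    push_neg at hc
    exact h (hmono a b j t hc)
  have hinner : ∀ t'' ∈ Finset.Icc 1 T,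
      (∑ j'' : J, (if j'' = j' ∧ t'' = t' then x j'' t'' else 0))
        = if t'' = t' then x j' t' else 0 := by
    intro t'' _
    by_cases h : t'' = t'
    · simp [h]
    · simp [h]
  have hsingle : (∑ t'' ∈ Finset.Icc 1 T, ∑ j'' : J,
      (if j'' = j' ∧ t'' = t' then x j'' t'' else 0)) = x j' t' := by
    rw [Finset.sum_congr rfl hinner, Finset.sum_ite_eq' (Finset.Icc 1 T) t' (fun _ => x j' t')]
    simp [ht']
  have step1 : packS T x K j' t' + x j' t'
      ≤ packS T x K j t + ∑ t'' ∈ Finset.Icc 1 T, ∑ j'' : J,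
          (if t ≤ t'' ∧ t'' ≤ t + C then x j'' t'' else 0) := by
    have lhs_eq : packS T x K j' t' + x j' t'
        = ∑ t'' ∈ Finset.Icc 1 T, ∑ j'' : J,
            ((if K j'' t'' < K j' t' then x j'' t'' else 0)
              + (if j'' = j' ∧ t'' = t' then x j'' t'' else 0)) := by
      simp only [Finset.sum_add_distrib]
      rw [hsingle]; rfl
    have rhs_eq : packS T x K j t + ∑ t'' ∈ Finset.Icc 1 T, ∑ j'' : J,
          (if t ≤ t'' ∧ t'' ≤ t + C then x j'' t'' else 0)
        = ∑ t'' ∈ Finset.Icc 1 T, ∑ j'' : J,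
            ((if K j'' t'' < K j t then x j'' t'' else 0)
              + (if t ≤ t'' ∧ t'' ≤ t + C then x j'' t'' else 0)) := by
      simp only [Finset.sum_add_distrib]; rfl
    rw [lhs_eq, rhs_eq]
    refine Finset.sum_le_sum fun t'' _ => Finset.sum_le_sum fun j'' _ => ?_
    by_cases h3 : K j'' t'' < K j t
    · -- then K j'' t'' < K j' t' and (j'',t'') ≠ (j',t')
      have h1 : K j'' t'' < K j' t' := lt_trans h3 hK
      have h2 : ¬ (j'' = j' ∧ t'' = t') := by
        rintro ⟨rfl, rfl⟩; exact absurd (lt_trans h3 hK) (lt_irrefl _)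
      simp only [h1, h2, h3, if_true, if_false]
      have : (0:ℝ) ≤ if t ≤ t'' ∧ t'' ≤ t + C then x j'' t'' else 0 := by
        split <;> simp [hx0]
      linarith
    · have hge : t ≤ t'' := hKge j'' t'' h3
      by_cases h2 : j'' = j' ∧ t'' = t'
      · obtain ⟨rfl, rfl⟩ := h2
        have h1 : ¬ (K j'' t'' < K j'' t'') := lt_irrefl _
        have h4 : t ≤ t'' ∧ t'' ≤ t + C := ⟨hge, htw⟩
        simp [h1, h3, h4]
      · by_cases h1 : K j'' t'' < K j' t'
        · have h4 : t ≤ t'' ∧ t'' ≤ t + C := ⟨hge, le_trans (hKle _ _ _ _ h1) htw⟩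
          simp [h1, h2, h3, h4]
        · simp only [h1, h2, h3, if_false]
          have : (0:ℝ) ≤ if t ≤ t'' ∧ t'' ≤ t + C then x j'' t'' else 0 := by
            split <;> simp [hx0]
          linarith
  have step2 : (∑ t'' ∈ Finset.Icc 1 T, ∑ j'' : J,
      (if t ≤ t'' ∧ t'' ≤ t + C then x j'' t'' else 0)) ≤ 1 := by
    have pull : ∀ t'' : ℕ, (∑ j'' : J, (if t ≤ t'' ∧ t'' ≤ t + C then x j'' t'' else 0))
        = if t ≤ t'' ∧ t'' ≤ t + C then (∑ j'' : J, x j'' t'') else 0 := by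
      intro t''; split <;> simp
    calc (∑ t'' ∈ Finset.Icc 1 T, ∑ j'' : J,
            (if t ≤ t'' ∧ t'' ≤ t + C then x j'' t'' else 0))
        = ∑ t'' ∈ (Finset.Icc 1 T).filter (fun t'' => t ≤ t'' ∧ t'' ≤ t + C),
            ∑ j'' : J, x j'' t'' := by
          rw [Finset.sum_filter]
          exact Finset.sum_congr rfl fun t'' _ => pull t''
      _ ≤ ∑ t'' ∈ Finset.Icc t (t + C), ∑ j'' : J, x j'' t'' := by
          refine Finset.sum_le_sum_of_subset_of_nonneg ?_ ?_
          · intro a ha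
            rw [Finset.mem_filter] at ha
            rw [Finset.mem_Icc]
            exact ha.2
          · intro a _ _
            exact Finset.sum_nonneg fun j'' _ => hx0 j'' a
      _ = ∑ j'' : J, ∑ t'' ∈ Finset.Icc t (t + C), x j'' t'' := Finset.sum_comm
      _ ≤ 1 := hLP t
  linarith

noncomputable def packStripes {J : Type*} [Fintype J] (T : ℕ) (x : J → ℕ → ℝ)
    (K : J → ℕ → ℕ) (j : J) (t : ℕ) : Finset (ℝ × ℝ) :=
  let u := Int.fract (packS T x K j t)
  if u + x j t ≤ 1 then {(u, u + x j t)} else {(u, 1), (0, u + x j t - 1)}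

lemma packStripes_mem {J : Type*} [Fintype J] (T : ℕ) (x : J → ℕ → ℝ)
    (K : J → ℕ → ℕ) (j : J) (t : ℕ) (hpos : 0 < x j t) (hle : x j t ≤ 1)
    (s : ℝ × ℝ) (hs : s ∈ packStripes T x K j t) (y : ℝ) (hy : y ∈ Set.Ico s.1 s.2) :
    0 ≤ y ∧ y < 1 ∧ Int.fract (y - packS T x K j t) < x j t := by
  classical
  set S := packS T x K j t with hS
  set u := Int.fract S with hu
  have hu0 : 0 ≤ u := Int.fract_nonneg S
  have hu1 : u < 1 := Int.fract_lt_one S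
  have hfr : ∀ z : ℝ, Int.fract (z - S) = Int.fract (z - u) := by
    intro z
    have : z - S = (z - u) - (⌊S⌋ : ℤ) := by
      rw [hu, Int.fract]; ring
    rw [this, Int.fract_sub_intCast]
  obtain ⟨hy1, hy2⟩ := hy
  rw [packStripes] at hs
  simp only [← hS, ← hu] at hs
  by_cases hcase : u + x j t ≤ 1
  · rw [if_pos hcase, Finset.mem_singleton] at hs
    subst hs
    simp only at hy1 hy2
    have h1 : Int.fract (y - u) = y - u := by
      rw [Int.fract_eq_self]
      constructor <;> [linarith; linarith]
    refine ⟨by linarith, by linarith, ?_⟩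
    rw [hfr, h1]; linarith
  · push_neg at hcase
    rw [if_neg (by push_neg; exact hcase)] at hs
    rw [Finset.mem_insert, Finset.mem_singleton] at hs
    rcases hs with hs | hs
    · subst hs
      simp only at hy1 hy2
      have h1 : Int.fract (y - u) = y - u := by
        rw [Int.fract_eq_self]
        constructor <;> [linarith; linarith]
      refine ⟨by linarith, by linarith, ?_⟩
      rw [hfr, h1]; linarith
    · subst hs
      simp only at hy1 hy2
      have hyu : y < u := by linarith
      have h1 : Int.fract (y - u) = y - u + 1 := by
        have e1 : Int.fract (y - u + 1) = y - u + 1 :=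
          Int.fract_eq_self.2 ⟨by linarith, by linarith⟩
        calc Int.fract (y - u) = Int.fract ((y - u + 1) - ((1:ℤ):ℝ)) := by norm_num
          _ = Int.fract (y - u + 1) := Int.fract_sub_intCast _ _
          _ = y - u + 1 := e1
      refine ⟨hy1, by linarith, ?_⟩
      rw [hfr, h1]; linarith

lemma packStripes_props {J : Type*} [Fintype J] (T : ℕ) (x : J → ℕ → ℝ)
    (K : J → ℕ → ℕ) (j : J) (t : ℕ) (hpos : 0 < x j t) (hle : x j t ≤ 1) :
    (∀ s ∈ packStripes T x K j t, 0 ≤ s.1 ∧ s.1 ≤ s.2 ∧ s.2 ≤ 1) ∧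
    (∑ s ∈ packStripes T x K j t, (s.2 - s.1)) = x j t ∧
    (∀ s ∈ packStripes T x K j t, ∀ s' ∈ packStripes T x K j t, s ≠ s' →
      Set.Ico s.1 s.2 ∩ Set.Ico s'.1 s'.2 = ∅) := by
  classical
  set S := packS T x K j t with hS
  set u := Int.fract S with hu
  have hu0 : 0 ≤ u := Int.fract_nonneg S
  have hu1 : u < 1 := Int.fract_lt_one S
  rw [packStripes]
  simp only [← hS, ← hu]
  by_cases hcase : u + x j t ≤ 1
  · rw [if_pos hcase]
    refine ⟨?_, ?_, ?_⟩
    · intro s hs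
      rw [Finset.mem_singleton] at hs; subst hs
      exact ⟨hu0, by simp only; linarith, hcase⟩
    · simp
    · intro s hs s' hs' hne
      rw [Finset.mem_singleton] at hs hs'
      exact absurd (hs.trans hs'.symm) hne
  · push_neg at hcase
    have hune : u ≠ 0 := by
      intro h; rw [h] at hcase; linarith
    have hdiff : ((u, (1:ℝ)) : ℝ × ℝ) ≠ (0, u + x j t - 1) := by
      intro h
      exact hune (congrArg Prod.fst h)
    rw [if_neg (by push_neg; exact hcase)]
    refine ⟨?_, ?_, ?_⟩
    · intro s hs
      rw [Finset.mem_insert, Finset.mem_singleton] at hs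
      rcases hs with hs | hs <;> subst hs
      · exact ⟨hu0, le_of_lt hu1, le_refl _⟩
      · exact ⟨le_refl _, by simp only; linarith, by simp only; linarith⟩
    · rw [Finset.sum_pair hdiff]
      simp only; ring
    · intro s hs s' hs' hne
      rw [Finset.mem_insert, Finset.mem_singleton] at hs hs'
      have key : Set.Ico u (1:ℝ) ∩ Set.Ico (0:ℝ) (u + x j t - 1) = ∅ := by
        rw [Set.eq_empty_iff_forall_notMem]
        rintro y ⟨⟨h1, _⟩, ⟨_, h4⟩⟩
        linarith
      rcases hs with hs | hs <;> rcases hs' with hs' | hs' <;> subst hs <;> subst hs'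
      · exact absurd rfl hne
      · exact key
      · rw [Set.inter_comm]; exact key
      · exact absurd rfl hne

lemma packStripes_disjoint {J : Type*} [Fintype J] (T : ℕ) (x : J → ℕ → ℝ)
    (K : J → ℕ → ℕ) (j j' : J) (t t' : ℕ)
    (hpos : 0 < x j t) (hle : x j t ≤ 1) (hpos' : 0 < x j' t') (hle' : x j' t' ≤ 1)
    (hlow : packS T x K j t + x j t ≤ packS T x K j' t')
    (hupp : packS T x K j' t' + x j' t' ≤ packS T x K j t + 1) :
    ∀ s ∈ packStripes T x K j t, ∀ s' ∈ packStripes T x K j' t',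
      Set.Ico s.1 s.2 ∩ Set.Ico s'.1 s'.2 = ∅ := by
  intro s hs s' hs'
  rw [Set.eq_empty_iff_forall_notMem]
  rintro y ⟨hy, hy'⟩
  obtain ⟨_, _, ha⟩ := packStripes_mem T x K j t hpos hle s hs y hy
  obtain ⟨_, _, hb⟩ := packStripes_mem T x K j' t' hpos' hle' s' hs' y hy'
  set Sp := packS T x K j t
  set Sq := packS T x K j' t'
  set a := Int.fract (y - Sp) with hadef
  have ha0 : 0 ≤ a := Int.fract_nonneg _
  set d := Sq - Sp with hd
  have hd1 : x j t ≤ d := by rw [hd]; linarith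
  have hd2 : d ≤ 1 - x j' t' := by rw [hd]; linarith
  have hfl : ((⌊y - Sp⌋ : ℤ) : ℝ) + a = y - Sp := Int.floor_add_fract (y - Sp)
  have hsplit : y - Sq = (a - d) + ((⌊y - Sp⌋ : ℤ) : ℝ) := by rw [hd]; linarith
  have hfr : Int.fract (y - Sq) = a - d + 1 := by
    rw [hsplit, Int.fract_add_intCast]
    have e1 : Int.fract (a - d + 1) = a - d + 1 :=
      Int.fract_eq_self.2 ⟨by linarith, by linarith⟩
    calc Int.fract (a - d) = Int.fract ((a - d + 1) - ((1:ℤ):ℝ)) := by norm_num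
      _ = Int.fract (a - d + 1) := Int.fract_sub_intCast _ _
      _ = a - d + 1 := e1
  rw [hfr] at hb
  linarith

def pkey {J : Type*} (n : ℕ) (e : J → ℕ) (j : J) (t : ℕ) : ℕ := t * n + e j

lemma pkey_mono {J : Type*} (n : ℕ) (e : J → ℕ) (he : ∀ j, e j < n)
    (a : J) (b : ℕ) (a' : J) (b' : ℕ) (h : b < b') :
    pkey n e a b < pkey n e a' b' := by
  unfold pkey
  calc b * n + e a < b * n + n := by have := he a; omega
    _ = (b + 1) * n := by ring
    _ ≤ b' * n := Nat.mul_le_mul_right n h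
    _ ≤ b' * n + e a' := Nat.le_add_right _ _

lemma pkey_inj {J : Type*} (n : ℕ) (e : J → ℕ) (he : ∀ j, e j < n)
    (einj : Function.Injective e)
    (a : J) (b : ℕ) (a' : J) (b' : ℕ) (h : pkey n e a b = pkey n e a' b') :
    a = a' ∧ b = b' := by
  have hb : b = b' := by
    by_contra hc
    rcases Nat.lt_or_ge b b' with h' | h'
    · exact absurd h (Nat.ne_of_lt (pkey_mono n e he a b a' b' h'))
    · exact absurd h.symm (Nat.ne_of_lt (pkey_mono n e he a' b' a b (by omega)))
  subst hb
  refine ⟨einj ?_, rfl⟩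
  unfold pkey at h
  omega

/-- Packing lemma for randomized rounding: given a feasible fractional solution `x` for a
single vehicle (nonnegative, supported on available times, and with total fractional mass at
most 1 on every window of `C + 1` consecutive times), the rectangles `[t, t+C+1) × [0, x j t)`
can be packed into the strip `[1, T+C+1) × [0, 1)`, fragmenting only vertically: each
assignment `(j,t)` with `x j t > 0` receives a finite family of disjoint subintervals of
`[0,1)` of total length `x j t`, and two assignments with overlapping time windows receive
disjoint vertical pieces. -/
theorem stmt_6 {J : Type*} [Fintype J] (T C : ℕ) (avail : Finset ℕ)
    (havail : avail ⊆ Finset.Icc 1 T) (x : J → ℕ → ℝ)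
    (hx0 : ∀ j t, 0 ≤ x j t) (hsupp : ∀ j t, x j t ≠ 0 → t ∈ avail)
    (hLP : ∀ t : ℕ, (∑ j, ∑ t' ∈ Finset.Icc t (t + C), x j t') ≤ 1) :
    ∃ stripes : J → ℕ → Finset (ℝ × ℝ),
      (∀ j t, 0 < x j t →
        (∀ s ∈ stripes j t, 0 ≤ s.1 ∧ s.1 ≤ s.2 ∧ s.2 ≤ 1) ∧
        (∑ s ∈ stripes j t, (s.2 - s.1)) = x j t ∧
        (∀ s ∈ stripes j t, ∀ s' ∈ stripes j t, s ≠ s' →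
          Set.Ico s.1 s.2 ∩ Set.Ico s'.1 s'.2 = ∅)) ∧
      (∀ j t j' t', 0 < x j t → 0 < x j' t' → (j, t) ≠ (j', t') →
        t' ≤ t + C → t ≤ t' + C →
        ∀ s ∈ stripes j t, ∀ s' ∈ stripes j' t',
          Set.Ico s.1 s.2 ∩ Set.Ico s'.1 s'.2 = ∅) := by
  classical
  set n : ℕ := Fintype.card J with hn
  set e : J → ℕ := fun j => ((Fintype.equivFin J j : ℕ)) with he'
  have he : ∀ j, e j < n := fun j => (Fintype.equivFin J j).isLt
  have einj : Function.Injective e := fun a b h =>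
    (Fintype.equivFin J).injective (Fin.ext h)
  set K : J → ℕ → ℕ := pkey n e with hK'
  have hmono : ∀ (a : J) b (a' : J) b', b < b' → K a b < K a' b' :=
    fun a b a' b' h => pkey_mono n e he a b a' b' h
  have hx1 : ∀ j t, x j t ≤ 1 := by
    intro j t
    have h1 : x j t ≤ ∑ t' ∈ Finset.Icc t (t + C), x j t' :=
      Finset.single_le_sum (fun i _ => hx0 j i)
        (Finset.mem_Icc.2 ⟨le_refl t, Nat.le_add_right t C⟩)
    have h2 : (∑ t' ∈ Finset.Icc t (t + C), x j t')
        ≤ ∑ j' : J, ∑ t' ∈ Finset.Icc t (t + C), x j' t' :=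
      Finset.single_le_sum
        (fun j' _ => Finset.sum_nonneg fun i _ => hx0 j' i) (Finset.mem_univ j)
    linarith [hLP t]
  refine ⟨packStripes T x K, ?_, ?_⟩
  · intro j t hpos
    exact packStripes_props T x K j t hpos (hx1 j t)
  · intro j t j' t' hp hp' hne hw1 hw2 s hs s' hs'
    have ht : t ∈ Finset.Icc 1 T := havail (hsupp j t (ne_of_gt hp))
    have ht' : t' ∈ Finset.Icc 1 T := havail (hsupp j' t' (ne_of_gt hp'))
    have hKne : K j t ≠ K j' t' := by
      intro h
      obtain ⟨h1, h2⟩ := pkey_inj n e he einj j t j' t' h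
      exact hne (by rw [h1, h2])
    rcases hKne.lt_or_gt with hK | hK
    · exact packStripes_disjoint T x K j j' t t' hp (hx1 j t) hp' (hx1 j' t')
        (packS_lower T x K hx0 j j' t t' ht hK)
        (packS_upper T C x K hx0 hmono hLP j j' t t' ht' hK hw1) s hs s' hs'
    · rw [Set.inter_comm]
      exact packStripes_disjoint T x K j' j t' t hp' (hx1 j' t') hp (hx1 j t)
        (packS_lower T x K hx0 j' j t' t ht' hK)
        (packS_upper T C x K hx0 hmono hLP j' j t' t ht hK hw2) s' hs' s hs
end

section
/- In the greedy algorithm for the EV valet problem, adding a triple (i,j,t) to the schedule removes from the feasible set at most: all triples (i',j,t) with i' ≠ i (same station/time), and all triples (i,j',t') with t' ∈ [t − C_i, t + C_i], t' ≠ t (same vehicle within the charging window). Consequently, each greedy choice can exclude at most 2 triples of any fixed feasible schedule O that involve vehicle i, plus at most 1 triple of O at station/time (j,t), for a total of at most 3 excluded triples of O (counting (i,j,t) itself if it lies in O). -/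
noncomputable section

variable {V J : Type*}

theorem Nat.false_of_three_in_window_pairwise_far {t r a b c : ℕ}
    (ha : max (t - a) (a - t) ≤ r) (hb : max (t - b) (b - t) ≤ r) (hc : max (t - c) (c - t) ≤ r)
    (hab : r < max (a - b) (b - a)) (hac : r < max (a - c) (c - a))
    (hbc : r < max (b - c) (c - b)) : False := by
  -- the outermost two times would be more than `2r` apart inside a window of width `2r`
  simp only [max_le_iff, lt_max_iff] at *
  omega

open scoped Classical in
theorem filter_conflict_subset (C : V → ℕ) (O : Finset (V × J × ℕ)) (i : V) (j : J) (t : ℕ) :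
    O.filter (Conflict C (i, j, t)) ⊆
      O.filter (fun b => b.2.1 = j ∧ b.2.2 = t) ∪
      O.filter (fun b => b.1 = i ∧ max (t - b.2.2) (b.2.2 - t) ≤ C i) := by
  intro b hb
  simp only [Finset.mem_filter, Finset.mem_union, Conflict] at hb ⊢
  rcases hb with ⟨hbO, ⟨hj, ht⟩ | ⟨hi, hwin⟩⟩
  · exact Or.inl ⟨hbO, hj.symm, ht.symm⟩
  · exact Or.inr ⟨hbO, hi.symm, hwin⟩

namespace Feasible

variable {avail : V → Finset ℕ} {C : V → ℕ} {O : Finset (V × J × ℕ)}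

theorem card_filter_station_time_le_one (hO : Feasible avail C O) (j : J) (t : ℕ)
    [DecidablePred fun b : V × J × ℕ => b.2.1 = j ∧ b.2.2 = t] :
    (O.filter (fun b => b.2.1 = j ∧ b.2.2 = t)).card ≤ 1 := by
  refine Finset.card_le_one.mpr fun a ha b hb => ?_
  rw [Finset.mem_filter] at ha hb
  by_contra hab
  exact hO.2.1 a ha.1 b hb.1 hab ⟨ha.2.1.trans hb.2.1.symm, ha.2.2.trans hb.2.2.symm⟩

theorem card_filter_vehicle_window_le_two (hO : Feasible avail C O) (i : V) (t : ℕ)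
    [DecidablePred fun b : V × J × ℕ => b.1 = i ∧ max (t - b.2.2) (b.2.2 - t) ≤ C i] :
    (O.filter (fun b => b.1 = i ∧ max (t - b.2.2) (b.2.2 - t) ≤ C i)).card ≤ 2 := by
  by_contra! hcard
  obtain ⟨a, ha, b, hb, c, hc, hab, hac, hbc⟩ := Finset.two_lt_card.mp hcard
  rw [Finset.mem_filter] at ha hb hc
  have separated : ∀ x y, x ∈ O → y ∈ O → x.1 = i → y.1 = i → x ≠ y →
      C i < max (x.2.2 - y.2.2) (y.2.2 - x.2.2) := by
    rintro x y hx hy rfl hyx hxy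
    exact hO.2.2 x hx y hy hxy hyx.symm
  exact Nat.false_of_three_in_window_pairwise_far ha.2.2 hb.2.2 hc.2.2
    (separated a b ha.1 hb.1 ha.2.1 hb.2.1 hab) (separated a c ha.1 hc.1 ha.2.1 hc.2.1 hac)
    (separated b c hb.1 hc.1 hb.2.1 hc.2.1 hbc)

end Feasible

open scoped Classical in
/-- A greedy choice `(i,j,t)` excludes from a fixed feasible schedule `O` at most one triple at
station/time `(j,t)`, at most two triples of vehicle `i` with times in `[t − C_i, t + C_i]`,
and hence at most 3 triples of `O` in total. -/
theorem stmt_13 (avail : V → Finset ℕ) (C : V → ℕ)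
    (O : Finset (V × J × ℕ)) (hO : Feasible avail C O) (i : V) (j : J) (t : ℕ) :
    (O.filter (fun b => Conflict C (i, j, t) b) ⊆
      O.filter (fun b => b.2.1 = j ∧ b.2.2 = t) ∪
      O.filter (fun b => b.1 = i ∧ max (t - b.2.2) (b.2.2 - t) ≤ C i)) ∧
    (O.filter (fun b => b.2.1 = j ∧ b.2.2 = t)).card ≤ 1 ∧
    (O.filter (fun b => b.1 = i ∧ max (t - b.2.2) (b.2.2 - t) ≤ C i)).card ≤ 2 ∧
    (O.filter (fun b => Conflict C (i, j, t) b)).card ≤ 3 := by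
  have hsub := filter_conflict_subset C O i j t
  have hstation := hO.card_filter_station_time_le_one j t
  have hvehicle := hO.card_filter_vehicle_window_le_two i t
  refine ⟨hsub, hstation, hvehicle, ?_⟩
  calc (O.filter (Conflict C (i, j, t))).card
      ≤ (O.filter (fun b => b.2.1 = j ∧ b.2.2 = t)).card +
          (O.filter (fun b => b.1 = i ∧ max (t - b.2.2) (b.2.2 - t) ≤ C i)).card :=
        (Finset.card_le_card hsub).trans (Finset.card_union_le _ _)
    _ ≤ 1 + 2 := add_le_add hstation hvehicle
end
end

section
/- If there exists a perfect 3-dimensional matching in an instance (A, B, C, E) with |A| = |B| = |C| = k, then in the corresponding EV valet instance constructed with time horizon [4M + k] (M ≥ 2k), station j₀ with unit rewards at times [1,k] ∪ [2M+1, 2M+k] ∪ [4M+1, 4M+k], |E| − k extra stations with unit rewards at times M and 3M, one vehicle per hyperedge e = (α, β, γ) with availabilities {α, 2M+β, 4M+γ, M, 3M}, and uniform charging time C = M + k, there exists a feasible schedule collecting every unit reward, for a total of 3k + 2(|E| − k). -/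
noncomputable section

variable {V J : Type*}

/-- Forward direction of the hardness reduction: if the 3D-matching instance `(A,B,C,E)` with
`|A| = |B| = |C| = k` has a perfect matching, then in the corresponding EV valet instance
(time horizon `[4M + k]` with `M ≥ 2k`, a station `j₀` with unit rewards at times
`[1,k] ∪ [2M+1, 2M+k] ∪ [4M+1, 4M+k]`, `|E| − k` extra stations with unit rewards at times
`M` and `3M`, one vehicle per hyperedge `e = (α,β,γ)` with availabilities
`{α, 2M+β, 4M+γ, M, 3M}`, and uniform charging time `C = M + k`) there is a feasible schedule
collecting every unit reward, for a total of `3k + 2(|E| − k)`. -/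
theorem stmt_17 (k M : ℕ) (hk : 1 ≤ k) (hM : 2 * k ≤ M)
    (E : Finset (Fin k × Fin k × Fin k))
    (S : Finset (Fin k × Fin k × Fin k)) (hSE : S ⊆ E) (hScard : S.card = k)
    (hinj1 : Set.InjOn (fun e : Fin k × Fin k × Fin k => e.1) S)
    (hinj2 : Set.InjOn (fun e : Fin k × Fin k × Fin k => e.2.1) S)
    (hinj3 : Set.InjOn (fun e : Fin k × Fin k × Fin k => e.2.2) S) :
    let Veh := {e : Fin k × Fin k × Fin k // e ∈ E}
    let Sta := Unit ⊕ Fin (E.card - k)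
    let avail : Veh → Finset ℕ := fun e =>
      {(e.1.1 : ℕ) + 1, 2 * M + (e.1.2.1 : ℕ) + 1, 4 * M + (e.1.2.2 : ℕ) + 1, M, 3 * M}
    let p : Sta → ℕ → ℝ := fun j t =>
      match j with
      | Sum.inl _ => if (1 ≤ t ∧ t ≤ k) ∨ (2 * M + 1 ≤ t ∧ t ≤ 2 * M + k) ∨
          (4 * M + 1 ≤ t ∧ t ≤ 4 * M + k) then 1 else 0
      | Sum.inr _ => if t = M ∨ t = 3 * M then 1 else 0
    ∃ A : Finset (Veh × Sta × ℕ),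
      Feasible avail (fun _ => M + k) A ∧
      (∀ a ∈ A, a.2.2 ∈ Finset.Icc 1 (4 * M + k)) ∧
      (∑ a ∈ A, p a.2.1 a.2.2) = 3 * k + 2 * (E.card - k) := by
  classical
  intro Veh Sta avail p
  set SV : Finset Veh := E.attach.filter (fun e => e.1 ∈ S) with hSVdef
  set TV : Finset Veh := E.attach.filter (fun e => e.1 ∉ S) with hTVdef
  have hSVcard : SV.card = k := by
    have himg : SV.image (Subtype.val) = S := by
      ext x
      simp only [hSVdef, Finset.mem_image, Finset.mem_filter, Finset.mem_attach, true_and]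
      constructor
      · rintro ⟨e, he, rfl⟩; exact he
      · intro hx; exact ⟨⟨x, hSE hx⟩, hx, rfl⟩
    calc SV.card = (SV.image Subtype.val).card :=
          (Finset.card_image_of_injective _ Subtype.val_injective).symm
      _ = k := by rw [himg, hScard]
  have hTVcard : TV.card = E.card - k := by
    have himg : TV.image (Subtype.val) = E \ S := by
      ext x
      simp only [hTVdef, Finset.mem_image, Finset.mem_filter, Finset.mem_attach, true_and,
        Finset.mem_sdiff]
      constructor
      · rintro ⟨e, he, rfl⟩; exact ⟨e.2, he⟩
      · rintro ⟨hxE, hxS⟩; exact ⟨⟨x, hxE⟩, hxS, rfl⟩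
    calc TV.card = (TV.image Subtype.val).card :=
          (Finset.card_image_of_injective _ Subtype.val_injective).symm
      _ = E.card - k := by rw [himg, Finset.card_sdiff_of_subset hSE, hScard]
  let gi : {x // x ∈ TV} → Fin (E.card - k) := fun x => Fin.cast hTVcard (TV.equivFin x)
  have hgi : Function.Injective gi :=
    (Fin.cast_injective hTVcard).comp TV.equivFin.injective
  let f1 : Veh → Veh × Sta × ℕ := fun e => (e, Sum.inl (), (e.1.1 : ℕ) + 1)
  let f2 : Veh → Veh × Sta × ℕ := fun e => (e, Sum.inl (), 2 * M + (e.1.2.1 : ℕ) + 1)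
  let f3 : Veh → Veh × Sta × ℕ := fun e => (e, Sum.inl (), 4 * M + (e.1.2.2 : ℕ) + 1)
  let g1 : {x // x ∈ TV} → Veh × Sta × ℕ := fun x => (x.1, Sum.inr (gi x), M)
  let g2 : {x // x ∈ TV} → Veh × Sta × ℕ := fun x => (x.1, Sum.inr (gi x), 3 * M)
  have hf1 : Function.Injective f1 := fun a b h => congrArg Prod.fst h
  have hf2 : Function.Injective f2 := fun a b h => congrArg Prod.fst h
  have hf3 : Function.Injective f3 := fun a b h => congrArg Prod.fst h
  have hg1 : Function.Injective g1 := fun a b h => Subtype.ext (congrArg Prod.fst h)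
  have hg2 : Function.Injective g2 := fun a b h => Subtype.ext (congrArg Prod.fst h)
  have hSmem : ∀ e ∈ SV, e.1 ∈ S := fun e he => (Finset.mem_filter.mp he).2
  have hTmem : ∀ x : {x // x ∈ TV}, x.1.1 ∉ S := fun x => (Finset.mem_filter.mp x.2).2
  set A : Finset (Veh × Sta × ℕ) :=
    SV.image f1 ∪ SV.image f2 ∪ SV.image f3 ∪ TV.attach.image g1 ∪ TV.attach.image g2 with hAdef
  have hmem : ∀ a ∈ A, (∃ e, e ∈ SV ∧ (a = f1 e ∨ a = f2 e ∨ a = f3 e)) ∨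
      (∃ x : {x // x ∈ TV}, a = g1 x ∨ a = g2 x) := by
    intro a ha
    rw [hAdef] at ha
    simp only [Finset.mem_union, Finset.mem_image, Finset.mem_attach, true_and] at ha
    rcases ha with ((((⟨e, he, h⟩ | ⟨e, he, h⟩) | ⟨e, he, h⟩) | ⟨x, h⟩) | ⟨x, h⟩)
    · exact Or.inl ⟨e, he, Or.inl h.symm⟩
    · exact Or.inl ⟨e, he, Or.inr (Or.inl h.symm)⟩
    · exact Or.inl ⟨e, he, Or.inr (Or.inr h.symm)⟩
    · exact Or.inr ⟨x, Or.inl h.symm⟩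
    · exact Or.inr ⟨x, Or.inr h.symm⟩
  refine ⟨A, ⟨?_, ?_, ?_⟩, ?_, ?_⟩
  · -- availability
    intro a ha
    rcases hmem a ha with ⟨e, he, (rfl | rfl | rfl)⟩ | ⟨x, (rfl | rfl)⟩ <;>
      simp [avail, f1, f2, f3, g1, g2]
  · -- no station-time clash
    rintro a ha b hb hab ⟨hst, htt⟩
    rcases hmem a ha with ⟨e, he, (rfl | rfl | rfl)⟩ | ⟨x, (rfl | rfl)⟩ <;>
      rcases hmem b hb with ⟨e', he', (rfl | rfl | rfl)⟩ | ⟨y, (rfl | rfl)⟩ <;>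
      simp only [f1, f2, f3, g1, g2] at hst htt hab <;>
      [skip; skip; skip; simp at hst; simp at hst;
       skip; skip; skip; simp at hst; simp at hst;
       skip; skip; skip; simp at hst; simp at hst;
       simp at hst; simp at hst; simp at hst; skip; skip;
       simp at hst; simp at hst; simp at hst; skip; skip]
    -- remaining: 9 f×f cases and 4 g×g cases
    · have hv : e.1.1 = e'.1.1 := Fin.val_injective (by omega)
      exact hab (congrArg f1 (Subtype.ext (hinj1 (hSmem e he) (hSmem e' he') hv)))
    · have := e.1.1.isLt; have := e'.1.2.1.isLt; omega
    · have := e.1.1.isLt; have := e'.1.2.2.isLt; omega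
    · have := e'.1.1.isLt; have := e.1.2.1.isLt; omega
    · have hv : e.1.2.1 = e'.1.2.1 := Fin.val_injective (by omega)
      exact hab (congrArg f2 (Subtype.ext (hinj2 (hSmem e he) (hSmem e' he') hv)))
    · have := e.1.2.1.isLt; have := e'.1.2.2.isLt; omega
    · have := e'.1.1.isLt; have := e.1.2.2.isLt; omega
    · have := e'.1.2.1.isLt; have := e.1.2.2.isLt; omega
    · have hv : e.1.2.2 = e'.1.2.2 := Fin.val_injective (by omega)
      exact hab (congrArg f3 (Subtype.ext (hinj3 (hSmem e he) (hSmem e' he') hv)))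
    · exact hab (congrArg g1 (hgi (Sum.inr.inj hst)))
    · omega
    · omega
    · exact hab (congrArg g2 (hgi (Sum.inr.inj hst)))
  · -- charging
    rintro a ha b hb hab hveh
    rcases hmem a ha with ⟨e, he, (rfl | rfl | rfl)⟩ | ⟨x, (rfl | rfl)⟩ <;>
      rcases hmem b hb with ⟨e', he', (rfl | rfl | rfl)⟩ | ⟨y, (rfl | rfl)⟩ <;>
      simp only [f1, f2, f3, g1, g2] at hveh hab ⊢ <;>
      rw [lt_max_iff]
    · exact absurd (congrArg f1 hveh) hab
    · subst hveh; have := e.1.1.isLt; have := e.1.2.1.isLt; omega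
    · subst hveh; have := e.1.1.isLt; have := e.1.2.2.isLt; omega
    · exact absurd (hTmem y (hveh ▸ hSmem e he)) not_false
    · exact absurd (hTmem y (hveh ▸ hSmem e he)) not_false
    · subst hveh; have := e.1.1.isLt; have := e.1.2.1.isLt; omega
    · exact absurd (congrArg f2 hveh) hab
    · subst hveh; have := e.1.2.1.isLt; have := e.1.2.2.isLt; omega
    · exact absurd (hTmem y (hveh ▸ hSmem e he)) not_false
    · exact absurd (hTmem y (hveh ▸ hSmem e he)) not_false
    · subst hveh; have := e.1.1.isLt; have := e.1.2.2.isLt; omega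
    · subst hveh; have := e.1.2.1.isLt; have := e.1.2.2.isLt; omega
    · exact absurd (congrArg f3 hveh) hab
    · exact absurd (hTmem y (hveh ▸ hSmem e he)) not_false
    · exact absurd (hTmem y (hveh ▸ hSmem e he)) not_false
    · exact absurd (hTmem x (hveh ▸ hSmem e' he')) not_false
    · exact absurd (hTmem x (hveh ▸ hSmem e' he')) not_false
    · exact absurd (hTmem x (hveh ▸ hSmem e' he')) not_false
    · exact absurd (congrArg g1 (Subtype.ext hveh)) hab
    · omega
    · exact absurd (hTmem x (hveh ▸ hSmem e' he')) not_false
    · exact absurd (hTmem x (hveh ▸ hSmem e' he')) not_false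
    · exact absurd (hTmem x (hveh ▸ hSmem e' he')) not_false
    · omega
    · exact absurd (congrArg g2 (Subtype.ext hveh)) hab
  · -- horizon
    intro a ha
    rcases hmem a ha with ⟨e, he, (rfl | rfl | rfl)⟩ | ⟨x, (rfl | rfl)⟩ <;>
      simp only [f1, f2, f3, g1, g2, Finset.mem_Icc]
    · have := e.1.1.isLt; omega
    · have := e.1.2.1.isLt; omega
    · have := e.1.2.2.isLt; omega
    · omega
    · omega
  · -- total reward
    have hone : ∀ a ∈ A, p a.2.1 a.2.2 = (1 : ℝ) := by
      intro a ha
      rcases hmem a ha with ⟨e, he, (rfl | rfl | rfl)⟩ | ⟨x, (rfl | rfl)⟩ <;>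
        simp only [f1, f2, f3, g1, g2, p]
      · rw [if_pos (Or.inl ⟨by omega, by have := e.1.1.isLt; omega⟩)]
      · rw [if_pos (Or.inr (Or.inl ⟨by omega, by have := e.1.2.1.isLt; omega⟩))]
      · rw [if_pos (Or.inr (Or.inr ⟨by omega, by have := e.1.2.2.isLt; omega⟩))]
      · simp
      · simp
    rw [Finset.sum_congr rfl hone, Finset.sum_const, nsmul_eq_mul, mul_one]
    have hcard : A.card = 3 * k + 2 * (E.card - k) := by
      have d12 : Disjoint (SV.image f1) (SV.image f2) := by
        rw [Finset.disjoint_left]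
        intro a ha hb
        simp only [Finset.mem_image] at ha hb
        obtain ⟨e, he, rfl⟩ := ha
        obtain ⟨e', he', heq⟩ := hb
        simp only [f1, f2, Prod.mk.injEq] at heq
        have := e.1.1.isLt; omega
      have d13 : Disjoint (SV.image f1) (SV.image f3) := by
        rw [Finset.disjoint_left]
        intro a ha hb
        simp only [Finset.mem_image] at ha hb
        obtain ⟨e, he, rfl⟩ := ha
        obtain ⟨e', he', heq⟩ := hb
        simp only [f1, f3, Prod.mk.injEq] at heq
        have := e.1.1.isLt; omega
      have d23 : Disjoint (SV.image f2) (SV.image f3) := by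
        rw [Finset.disjoint_left]
        intro a ha hb
        simp only [Finset.mem_image] at ha hb
        obtain ⟨e, he, rfl⟩ := ha
        obtain ⟨e', he', heq⟩ := hb
        simp only [f2, f3, Prod.mk.injEq] at heq
        have := e.1.2.1.isLt; omega
      have d14 : Disjoint (SV.image f1) (TV.attach.image g1) := by
        rw [Finset.disjoint_left]
        intro a ha hb
        simp only [Finset.mem_image, Finset.mem_attach, true_and] at ha hb
        obtain ⟨e, he, rfl⟩ := ha
        obtain ⟨x, heq⟩ := hb
        simp only [f1, g1, Prod.mk.injEq] at heq
        exact absurd heq.2.1 (by simp)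
      have d24 : Disjoint (SV.image f2) (TV.attach.image g1) := by
        rw [Finset.disjoint_left]
        intro a ha hb
        simp only [Finset.mem_image, Finset.mem_attach, true_and] at ha hb
        obtain ⟨e, he, rfl⟩ := ha
        obtain ⟨x, heq⟩ := hb
        simp only [f2, g1, Prod.mk.injEq] at heq
        exact absurd heq.2.1 (by simp)
      have d34 : Disjoint (SV.image f3) (TV.attach.image g1) := by
        rw [Finset.disjoint_left]
        intro a ha hb
        simp only [Finset.mem_image, Finset.mem_attach, true_and] at ha hb
        obtain ⟨e, he, rfl⟩ := ha
        obtain ⟨x, heq⟩ := hb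
        simp only [f3, g1, Prod.mk.injEq] at heq
        exact absurd heq.2.1 (by simp)
      have d15 : Disjoint (SV.image f1) (TV.attach.image g2) := by
        rw [Finset.disjoint_left]
        intro a ha hb
        simp only [Finset.mem_image, Finset.mem_attach, true_and] at ha hb
        obtain ⟨e, he, rfl⟩ := ha
        obtain ⟨x, heq⟩ := hb
        simp only [f1, g2, Prod.mk.injEq] at heq
        exact absurd heq.2.1 (by simp)
      have d25 : Disjoint (SV.image f2) (TV.attach.image g2) := by
        rw [Finset.disjoint_left]
        intro a ha hb
        simp only [Finset.mem_image, Finset.mem_attach, true_and] at ha hb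
        obtain ⟨e, he, rfl⟩ := ha
        obtain ⟨x, heq⟩ := hb
        simp only [f2, g2, Prod.mk.injEq] at heq
        exact absurd heq.2.1 (by simp)
      have d35 : Disjoint (SV.image f3) (TV.attach.image g2) := by
        rw [Finset.disjoint_left]
        intro a ha hb
        simp only [Finset.mem_image, Finset.mem_attach, true_and] at ha hb
        obtain ⟨e, he, rfl⟩ := ha
        obtain ⟨x, heq⟩ := hb
        simp only [f3, g2, Prod.mk.injEq] at heq
        exact absurd heq.2.1 (by simp)
      have d45 : Disjoint (TV.attach.image g1) (TV.attach.image g2) := by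
        rw [Finset.disjoint_left]
        intro a ha hb
        simp only [Finset.mem_image, Finset.mem_attach, true_and] at ha hb
        obtain ⟨x, rfl⟩ := ha
        obtain ⟨y, heq⟩ := hb
        simp only [g1, g2, Prod.mk.injEq] at heq
        omega
      rw [hAdef]
      rw [Finset.card_union_of_disjoint (by
        simp only [Finset.disjoint_union_left]
        exact ⟨⟨⟨d15, d25⟩, d35⟩, d45⟩)]
      rw [Finset.card_union_of_disjoint (by
        simp only [Finset.disjoint_union_left]
        exact ⟨⟨d14, d24⟩, d34⟩)]
      rw [Finset.card_union_of_disjoint (by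
        simp only [Finset.disjoint_union_left]
        exact ⟨d13, d23⟩)]
      rw [Finset.card_union_of_disjoint d12]
      rw [Finset.card_image_of_injective _ hf1, Finset.card_image_of_injective _ hf2,
        Finset.card_image_of_injective _ hf3, Finset.card_image_of_injective _ hg1,
        Finset.card_image_of_injective _ hg2, Finset.card_attach, hSVcard, hTVcard]
      ring
    rw [hcard]
    have hkE : k ≤ E.card := by have := Finset.card_le_card hSE; omega
    push_cast [Nat.cast_sub hkE]
    ring
end
end

section
/- In the reduction instance, for any vehicle corresponding to hyperedge e = (α, β, γ) with availability {α, 2M+β, 4M+γ, M, 3M} and charging time C = M + k where M ≥ 2k and α, β, γ ∈ {1,...,k}: the pairs of availabilities within distance C of each other are exactly (α, M), (M, 2M+β), (2M+β, 3M), and (3M, 4M+γ). In particular a vehicle can collect at most 3 rewards, and it collects 3 only via the times {α, 2M+β, 4M+γ} or via combinations using at most one of {M, 3M} between consecutive groups. -/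
lemma card3_aux (a b c : ℕ) : ({a, b, c} : Finset ℕ).card ≤ 3 := by
  apply (Finset.card_insert_le _ _).trans
  apply Nat.succ_le_succ
  apply (Finset.card_insert_le _ _).trans
  simp

/-- Conflict structure of the hardness reduction: for a vehicle with availabilities
`{α, 2M+β, 4M+γ, M, 3M}` and charging time `C = M + k` (where `M ≥ 2k`, `1 ≤ k`, and
`α, β, γ ∈ {1,...,k}`), the pairs of availabilities within distance `C` are exactly
`(α, M)`, `(M, 2M+β)`, `(2M+β, 3M)`, `(3M, 4M+γ)`; consequently any feasible set of
discharge times of this vehicle (pairwise more than `C` apart) has at most 3 elements. -/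
theorem stmt_18 (k M α β γ : ℕ) (hk : 1 ≤ k) (hM : 2 * k ≤ M)
    (hα : 1 ≤ α ∧ α ≤ k) (hβ : 1 ≤ β ∧ β ≤ k) (hγ : 1 ≤ γ ∧ γ ≤ k) :
    let avail : Finset ℕ := {α, 2 * M + β, 4 * M + γ, M, 3 * M}
    (∀ t ∈ avail, ∀ t' ∈ avail, t < t' →
      (t' - t ≤ M + k ↔
        ((t, t') = (α, M) ∨ (t, t') = (M, 2 * M + β) ∨
         (t, t') = (2 * M + β, 3 * M) ∨ (t, t') = (3 * M, 4 * M + γ)))) ∧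
    (∀ S : Finset ℕ, S ⊆ avail →
      (∀ s ∈ S, ∀ s' ∈ S, s ≠ s' → M + k < max (s - s') (s' - s)) → S.card ≤ 3) := by
  intro avail
  obtain ⟨hα1, hα2⟩ := hα
  obtain ⟨hβ1, hβ2⟩ := hβ
  obtain ⟨hγ1, hγ2⟩ := hγ
  constructor
  · intro t ht t' ht' hlt
    simp only [avail, Finset.mem_insert, Finset.mem_singleton] at ht ht'
    simp only [Prod.mk.injEq]
    rcases ht with h | h | h | h | h <;> rcases ht' with h' | h' | h' | h' | h' <;>
      subst h <;> subst h' <;> omega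
  · intro S hsub hfeas
    have h1 : α ∉ S ∨ M ∉ S := by
      by_contra h
      push_neg at h
      have := hfeas _ h.1 _ h.2 (by omega)
      omega
    have h2 : (2 * M + β) ∉ S ∨ (3 * M) ∉ S := by
      by_contra h
      push_neg at h
      have := hfeas _ h.1 _ h.2 (by omega)
      omega
    have key : ∀ x y : ℕ, x ∉ S → y ∉ S →
        (∀ s, s = α ∨ s = 2 * M + β ∨ s = 4 * M + γ ∨ s = M ∨ s = 3 * M →
          s ≠ x → s ≠ y → s = x ∨ s = y ∨ False → False) → True := fun _ _ _ _ _ => trivial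
    rcases h1 with hx | hx <;> rcases h2 with hy | hy
    · have hS : S ⊆ ({4 * M + γ, M, 3 * M} : Finset ℕ) := by
        intro s hs
        have hm := hsub hs
        simp only [avail, Finset.mem_insert, Finset.mem_singleton] at hm ⊢
        rcases hm with h | h | h | h | h <;> subst h <;> first
          | exact absurd hs hx | exact absurd hs hy | tauto
      exact (Finset.card_le_card hS).trans (card3_aux _ _ _)
    · have hS : S ⊆ ({2 * M + β, 4 * M + γ, M} : Finset ℕ) := by
        intro s hs
        have hm := hsub hs
        simp only [avail, Finset.mem_insert, Finset.mem_singleton] at hm ⊢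
        rcases hm with h | h | h | h | h <;> subst h <;> first
          | exact absurd hs hx | exact absurd hs hy | tauto
      exact (Finset.card_le_card hS).trans (card3_aux _ _ _)
    · have hS : S ⊆ ({α, 4 * M + γ, 3 * M} : Finset ℕ) := by
        intro s hs
        have hm := hsub hs
        simp only [avail, Finset.mem_insert, Finset.mem_singleton] at hm ⊢
        rcases hm with h | h | h | h | h <;> subst h <;> first
          | exact absurd hs hx | exact absurd hs hy | tauto
      exact (Finset.card_le_card hS).trans (card3_aux _ _ _)
    · have hS : S ⊆ ({α, 2 * M + β, 4 * M + γ} : Finset ℕ) := by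
        intro s hs
        have hm := hsub hs
        simp only [avail, Finset.mem_insert, Finset.mem_singleton] at hm ⊢
        rcases hm with h | h | h | h | h <;> subst h <;> first
          | exact absurd hs hx | exact absurd hs hy | tauto
      exact (Finset.card_le_card hS).trans (card3_aux _ _ _)
end
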